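/- arXiv:1706.00625 — 7 statements merged into one kernel-verified Lean document; each statement's English description precedes it below -/
import Mathlib

section
/- Let L and E be normed spaces and suppose the algebraic tensor product L ⊗ E carries a seminorm making it a contractive left module over B(L) (i.e. ‖a · u‖ ≤ ‖a‖‖u‖ for all a ∈ B(L), u ∈ L ⊗ E, where a · (ξ ⊗ x) = a(ξ) ⊗ x). If moreover for every unit vector ξ ∈ L and every nonzero x ∈ E one has ‖ξ ⊗ x‖ > 0 (equivalently, the induced underlying seminorm on E is a norm), then the seminorm on L ⊗ E is a norm. -/
/-!
Given `u ≠ 0` in `L ⊗ E`, write `u = ∑ᵢ mᵢ ⊗ eᵢ` over a basis `(eᵢ)` of `E` and pick a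
continuous functional `f` (Hahn–Banach) with `f mᵢ ≠ 0` for some `i`; then
`x := (f ⊗ id) u ≠ 0`. For a unit vector `ξ`, the rank-one operator `a = f(·) ξ` acts by
`a · u = ξ ⊗ x`, so `0 < N (ξ ⊗ x) ≤ ‖a‖ N u` forces `N u > 0`.
-/

open TensorProduct

section

variable {R M N P : Type*} [CommSemiring R] [AddCommMonoid M] [Module R M] [AddCommMonoid N]
  [Module R N] [AddCommMonoid P] [Module R P]

lemma TensorProduct.equivFinsuppOfBasisRight_rTensor_apply {κ : Type*} [DecidableEq κ]
    (𝒞 : Module.Basis κ R N) (f : M →ₗ[R] P) (x : M ⊗[R] N) (i : κ) :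
    equivFinsuppOfBasisRight 𝒞 (f.rTensor N x) i = f (equivFinsuppOfBasisRight 𝒞 x i) := by
  induction x <;> simp_all

lemma LinearMap.rTensor_smulRight_apply (f : M →ₗ[R] R) (p : P) (x : M ⊗[R] N) :
    (f.smulRight p).rTensor N x = p ⊗ₜ TensorProduct.lid R N (f.rTensor N x) := by
  induction x with
  | zero => simp
  | tmul m n => simp [smul_tmul]
  | add x y hx hy => simp only [map_add, hx, hy, tmul_add]

end

lemma exists_strongDual_rTensor_ne_zero {𝕜 L E : Type*} [RCLike 𝕜] [NormedAddCommGroup L]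
    [NormedSpace 𝕜 L] [AddCommGroup E] [Module 𝕜 E] {u : L ⊗[𝕜] E} (hu : u ≠ 0) :
    ∃ f : StrongDual 𝕜 L, (f : L →ₗ[𝕜] 𝕜).rTensor E u ≠ 0 := by
  classical
  let 𝒞 := Module.Basis.ofVectorSpace 𝕜 E
  obtain ⟨i, hi⟩ := Finsupp.ne_iff.1 ((equivFinsuppOfBasisRight (M := L) 𝒞).map_ne_zero_iff.2 hu)
  obtain ⟨f, -, hf⟩ := exists_dual_vector 𝕜 _ (norm_ne_zero_iff.2 hi)
  refine ⟨f, fun h => hi ?_⟩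
  have := equivFinsuppOfBasisRight_rTensor_apply 𝒞 (f : L →ₗ[𝕜] 𝕜) u i
  rw [h, map_zero, Finsupp.zero_apply, ContinuousLinearMap.coe_coe, hf] at this
  exact norm_eq_zero.1 (RCLike.ofReal_eq_zero.1 this.symm)

theorem lSeminorm_isNorm_of_underlying_norm_general
    (L E : Type*) [NormedAddCommGroup L] [NormedSpace ℂ L] [Nontrivial L]
    [NormedAddCommGroup E] [NormedSpace ℂ E]
    (N : L ⊗[ℂ] E → ℝ)
    (hcontr : ∀ (a : L →L[ℂ] L) (u : L ⊗[ℂ] E),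
      N (LinearMap.rTensor E (a : L →ₗ[ℂ] L) u) ≤ ‖a‖ * N u)
    (hund : ∀ (ξ : L) (x : E), ‖ξ‖ = 1 → x ≠ 0 → 0 < N (ξ ⊗ₜ[ℂ] x)) :
    ∀ u : L ⊗[ℂ] E, u ≠ 0 → 0 < N u := by
  intro u hu
  obtain ⟨f, hf⟩ := exists_strongDual_rTensor_ne_zero hu
  obtain ⟨ξ, hξ⟩ := exists_norm_eq L zero_le_one
  have hrank := hcontr (f.smulRight ξ) u
  rw [show ((f.smulRight ξ : L →L[ℂ] L) : L →ₗ[ℂ] L) = (f : L →ₗ[ℂ] ℂ).smulRight ξ from rfl,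
    LinearMap.rTensor_smulRight_apply] at hrank
  exact pos_of_mul_pos_right
    ((hund ξ _ hξ ((TensorProduct.lid ℂ E).map_ne_zero_iff.2 hf)).trans_le hrank) (norm_nonneg _)

/-- If an `L`-seminorm on `E` (a seminorm on `L ⊗ E` making it a contractive
left `B(L)`-module) induces a norm on `E` (elementary tensors with unit `ξ` and nonzero `x`
have positive seminorm), then the seminorm on `L ⊗ E` is a norm. -/
theorem lSeminorm_isNorm_of_underlying_norm
    (L E : Type*) [NormedAddCommGroup L] [NormedSpace ℂ L] [Nontrivial L]
    [NormedAddCommGroup E] [NormedSpace ℂ E]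
    (N : L ⊗[ℂ] E → ℝ)
    (hN0 : N 0 = 0)
    (hNadd : ∀ u v : L ⊗[ℂ] E, N (u + v) ≤ N u + N v)
    (hNsmul : ∀ (c : ℂ) (u : L ⊗[ℂ] E), N (c • u) = ‖c‖ * N u)
    (hcontr : ∀ (a : L →L[ℂ] L) (u : L ⊗[ℂ] E),
      N (LinearMap.rTensor E (a : L →ₗ[ℂ] L) u) ≤ ‖a‖ * N u)
    (hund : ∀ (ξ : L) (x : E), ‖ξ‖ = 1 → x ≠ 0 → 0 < N (ξ ⊗ₜ[ℂ] x)) :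
    ∀ u : L ⊗[ℂ] E, u ≠ 0 → 0 < N u :=
  lSeminorm_isNorm_of_underlying_norm_general L E N hcontr hund
end

section
/- Let E be a normed L-space and f : E → ℂ a bounded linear functional. Then the amplification f_∞ := id_L ⊗ f : L ⊗ E → L (with the L-norm on L ⊗ E and the given norm on L) is bounded, and ‖f_∞‖ = ‖f‖. -/
/-!
For a norm-one functional `φ` on `L` and a unit vector `η`, the rank-one operator
`ξ ↦ φ ξ • η` acts on `L ⊗ E` as `u ↦ η ⊗ (φ ⊗ id) u`, so contractivity of the module action
together with `N (η ⊗ x) = ‖x‖` gives `‖(φ ⊗ id) u‖ ≤ N u`. Since `φ (f_∞ u) = f ((φ ⊗ id) u)`,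
choosing by Hahn–Banach a `φ` that norms `f_∞ u` yields `‖f_∞ u‖ ≤ ‖f‖ N u`. Conversely,
`f_∞ (η ⊗ x) = f x • η` and `N (η ⊗ x) = ‖x‖`, so no constant below `‖f‖` works.
-/

open TensorProduct

namespace TensorProduct

section Algebra

variable {R L E : Type*} [CommSemiring R] [AddCommMonoid L] [Module R L]
  [AddCommMonoid E] [Module R E]

variable (L) in
def amplification (f : E →ₗ[R] R) : L ⊗[R] E →ₗ[R] L :=
  (TensorProduct.rid R L).toLinearMap ∘ₗ f.lTensor L

variable (E) in
def slice (φ : L →ₗ[R] R) : L ⊗[R] E →ₗ[R] E :=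
  (TensorProduct.lid R E).toLinearMap ∘ₗ φ.rTensor E

@[simp]
theorem amplification_tmul (f : E →ₗ[R] R) (ξ : L) (x : E) :
    amplification L f (ξ ⊗ₜ x) = f x • ξ := by
  simp [amplification]

@[simp]
theorem slice_tmul (φ : L →ₗ[R] R) (ξ : L) (x : E) : slice E φ (ξ ⊗ₜ x) = φ ξ • x := by
  simp [slice]

theorem rTensor_smulRight_apply (φ : L →ₗ[R] R) (η : L) (u : L ⊗[R] E) :
    (φ.smulRight η).rTensor E u = η ⊗ₜ slice E φ u := by
  induction u using TensorProduct.induction_on with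
  | zero => simp
  | tmul ξ x => simp [smul_tmul]
  | add v w hv hw => simp only [map_add, hv, hw, tmul_add]

theorem apply_amplification (φ : L →ₗ[R] R) (f : E →ₗ[R] R) (u : L ⊗[R] E) :
    φ (amplification L f u) = f (slice E φ u) := by
  induction u using TensorProduct.induction_on with
  | zero => simp
  | tmul ξ x => simp [mul_comm]
  | add v w hv hw => simp only [map_add, hv, hw]

end Algebra

section Norm

variable {𝕜 L E : Type*} [RCLike 𝕜] [NormedAddCommGroup L] [NormedSpace 𝕜 L] [Nontrivial L]
  [NormedAddCommGroup E] [NormedSpace 𝕜 E] {N : L ⊗[𝕜] E → ℝ}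

theorem norm_slice_le
    (hcontr : ∀ (a : L →L[𝕜] L) (u : L ⊗[𝕜] E),
      N (LinearMap.rTensor E (a : L →ₗ[𝕜] L) u) ≤ ‖a‖ * N u)
    (hund : ∀ (ξ : L) (x : E), ‖ξ‖ = 1 → N (ξ ⊗ₜ[𝕜] x) = ‖x‖)
    (φ : StrongDual 𝕜 L) (u : L ⊗[𝕜] E) :
    ‖slice E (φ : L →ₗ[𝕜] 𝕜) u‖ ≤ ‖φ‖ * N u := by
  obtain ⟨⟨η, hη⟩⟩ := NormedSpace.sphere_nonempty_rclike 𝕜 (E := L) zero_le_one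
  rw [mem_sphere_zero_iff_norm] at hη
  calc ‖slice E (φ : L →ₗ[𝕜] 𝕜) u‖ = N (η ⊗ₜ slice E (φ : L →ₗ[𝕜] 𝕜) u) := (hund η _ hη).symm
    _ = N (LinearMap.rTensor E ((φ.smulRight η : L →L[𝕜] L) : L →ₗ[𝕜] L) u) := by
      rw [← rTensor_smulRight_apply]; rfl
    _ ≤ ‖φ.smulRight η‖ * N u := hcontr _ u
    _ = ‖φ‖ * N u := by rw [ContinuousLinearMap.norm_smulRight_apply, hη, mul_one]

theorem norm_amplification_le
    (hcontr : ∀ (a : L →L[𝕜] L) (u : L ⊗[𝕜] E),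
      N (LinearMap.rTensor E (a : L →ₗ[𝕜] L) u) ≤ ‖a‖ * N u)
    (hund : ∀ (ξ : L) (x : E), ‖ξ‖ = 1 → N (ξ ⊗ₜ[𝕜] x) = ‖x‖)
    (f : StrongDual 𝕜 E) (u : L ⊗[𝕜] E) :
    ‖amplification L (f : E →ₗ[𝕜] 𝕜) u‖ ≤ ‖f‖ * N u := by
  obtain ⟨φ, hφ, hφu⟩ := exists_dual_vector' 𝕜 (amplification L (f : E →ₗ[𝕜] 𝕜) u)
  calc ‖amplification L (f : E →ₗ[𝕜] 𝕜) u‖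
      = ‖φ (amplification L (f : E →ₗ[𝕜] 𝕜) u)‖ := by rw [hφu, RCLike.norm_ofReal, abs_norm]
    _ = ‖f (slice E (φ : L →ₗ[𝕜] 𝕜) u)‖ := congrArg _ (apply_amplification _ _ u)
    _ ≤ ‖f‖ * ‖slice E (φ : L →ₗ[𝕜] 𝕜) u‖ := f.le_opNorm _
    _ ≤ ‖f‖ * N u := by
      simpa [hφ] using mul_le_mul_of_nonneg_left (norm_slice_le hcontr hund φ u) (norm_nonneg f)

theorem opNorm_le_of_norm_amplification_le
    (hund : ∀ (ξ : L) (x : E), ‖ξ‖ = 1 → N (ξ ⊗ₜ[𝕜] x) = ‖x‖)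
    {f : StrongDual 𝕜 E} {C : ℝ} (hC : 0 ≤ C)
    (hf : ∀ u, ‖amplification L (f : E →ₗ[𝕜] 𝕜) u‖ ≤ C * N u) :
    ‖f‖ ≤ C := by
  obtain ⟨⟨η, hη⟩⟩ := NormedSpace.sphere_nonempty_rclike 𝕜 (E := L) zero_le_one
  rw [mem_sphere_zero_iff_norm] at hη
  refine f.opNorm_le_bound hC fun x => ?_
  simpa [norm_smul, hη, hund η x hη] using hf (η ⊗ₜ x)

end Norm

end TensorProduct

theorem functional_amplification_bounded_general
    (L E : Type*) [NormedAddCommGroup L] [NormedSpace ℂ L] [Nontrivial L]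
    [NormedAddCommGroup E] [NormedSpace ℂ E]
    (N : L ⊗[ℂ] E → ℝ)
    (hcontr : ∀ (a : L →L[ℂ] L) (u : L ⊗[ℂ] E),
      N (LinearMap.rTensor E (a : L →ₗ[ℂ] L) u) ≤ ‖a‖ * N u)
    (hund : ∀ (ξ : L) (x : E), ‖ξ‖ = 1 → N (ξ ⊗ₜ[ℂ] x) = ‖x‖)
    (f : E →L[ℂ] ℂ) :
    (∀ u : L ⊗[ℂ] E,
      ‖(TensorProduct.rid ℂ L) (LinearMap.lTensor L (f : E →ₗ[ℂ] ℂ) u)‖ ≤ ‖f‖ * N u) ∧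
    (∀ C : ℝ, 0 ≤ C →
      (∀ u : L ⊗[ℂ] E,
        ‖(TensorProduct.rid ℂ L) (LinearMap.lTensor L (f : E →ₗ[ℂ] ℂ) u)‖ ≤ C * N u) →
      ‖f‖ ≤ C) :=
  ⟨norm_amplification_le hcontr hund f,
    fun _ hC hf => opNorm_le_of_norm_amplification_le hund hC hf⟩

/-- For a normed `L`-space `E` and a bounded functional `f : E → ℂ`,
the amplification `f_∞ = id_L ⊗ f : L ⊗ E → L` is bounded with `‖f_∞‖ = ‖f‖`
(stated as: `‖f‖` is the least constant `C ≥ 0` with `‖f_∞ u‖ ≤ C * ‖u‖`). -/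
theorem functional_amplification_bounded
    (L E : Type*) [NormedAddCommGroup L] [NormedSpace ℂ L] [Nontrivial L]
    [NormedAddCommGroup E] [NormedSpace ℂ E]
    (N : L ⊗[ℂ] E → ℝ)
    (hN0 : ∀ u : L ⊗[ℂ] E, N u = 0 ↔ u = 0)
    (hNadd : ∀ u v : L ⊗[ℂ] E, N (u + v) ≤ N u + N v)
    (hNsmul : ∀ (c : ℂ) (u : L ⊗[ℂ] E), N (c • u) = ‖c‖ * N u)
    (hcontr : ∀ (a : L →L[ℂ] L) (u : L ⊗[ℂ] E),
      N (LinearMap.rTensor E (a : L →ₗ[ℂ] L) u) ≤ ‖a‖ * N u)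
    (hund : ∀ (ξ : L) (x : E), ‖ξ‖ = 1 → N (ξ ⊗ₜ[ℂ] x) = ‖x‖)
    (f : E →L[ℂ] ℂ) :
    (∀ u : L ⊗[ℂ] E,
      ‖(TensorProduct.rid ℂ L) (LinearMap.lTensor L (f : E →ₗ[ℂ] ℂ) u)‖ ≤ ‖f‖ * N u) ∧
    (∀ C : ℝ, 0 ≤ C →
      (∀ u : L ⊗[ℂ] E,
        ‖(TensorProduct.rid ℂ L) (LinearMap.lTensor L (f : E →ₗ[ℂ] ℂ) u)‖ ≤ C * N u) →
      ‖f‖ ≤ C) :=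
  functional_amplification_bounded_general L E N hcontr hund f
end

section
/- Let E be a normed space, F a normed L-space, and equip E ⊗ F with the norm transported from E ⊗_π (L ⊗ F) via the flip isomorphism β : L ⊗ (E ⊗ F) → E ⊗ (L ⊗ F), ξ ⊗ (x ⊗ y) ↦ x ⊗ (ξ ⊗ y). Then this is an L-norm on E ⊗ F whose underlying norm on E ⊗ F coincides with the projective tensor norm: for every u ∈ E ⊗ F and every unit vector ξ ∈ L, ‖β(ξ ⊗ u)‖_{E ⊗_π (L⊗F)} = ‖u‖_{E ⊗_π F}. -/
/-!
Under the flip, `ξ ⊗ u` becomes `(id ⊗ (ξ ⊗ ·)) u` and `a ⊗ id` becomes `id ⊗ (a ⊗ id)`, so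
everything reduces to properties of the projective seminorm `π_p` on `E ⊗ V` built from a
seminorm `p` on `V`. It is functorial in the second factor: if `q ∘ T ≤ C • p` then
`π_q ∘ (id ⊗ T) ≤ C • π_p`; with `T = a ⊗ id` this is the contraction property. Taking
`T = (ξ ⊗ ·)`, isometric by the unit property, gives `π_M(β(ξ ⊗ u)) ≤ π(u)`. Conversely, for a
norming functional `φ` of `ξ`, the slice map `ξ' ⊗ y ↦ φ ξ' • y` undoes `ξ ⊗ ·` and is
contractive, because `ξ ⊗ (slice v)` is the image of `v` under the rank-one contraction
`φ(·) ξ`; this gives the reverse inequality. Definiteness holds because continuous functionals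
on `E` separate the points of `E ⊗ V`, and `π_p` dominates `p` after such a slice.
-/

open TensorProduct

open scoped Pointwise

namespace TensorProduct

variable {R L E F : Type*} [CommSemiring R] [AddCommMonoid L] [AddCommMonoid E]
  [AddCommMonoid F] [Module R L] [Module R E] [Module R F]

theorem leftComm_tmul_eq_lTensor_mk (ξ : L) (u : E ⊗[R] F) :
    leftComm R L E F (ξ ⊗ₜ u) = (mk R L F ξ).lTensor E u := by
  induction u using TensorProduct.induction_on with
  | zero => simp
  | tmul x y => simp
  | add u₁ u₂ h₁ h₂ => simp only [tmul_add, map_add, h₁, h₂]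

theorem leftComm_rTensor (a : L →ₗ[R] L) (U : L ⊗[R] (E ⊗[R] F)) :
    leftComm R L E F (a.rTensor (E ⊗[R] F) U) = (a.rTensor F).lTensor E (leftComm R L E F U) := by
  change ((leftComm R L E F).toLinearMap ∘ₗ a.rTensor _) U =
    ((a.rTensor F).lTensor E ∘ₗ (leftComm R L E F).toLinearMap) U
  congr 1
  exact ext_threefold' fun ξ x y => by simp

end TensorProduct

noncomputable section Projective

variable {𝕜 E V W : Type*} [NormedField 𝕜] [SeminormedAddCommGroup E] [NormedSpace 𝕜 E]
  [AddCommGroup V] [Module 𝕜 V] [AddCommGroup W] [Module 𝕜 W]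

def projectiveCosts (p : V → ℝ) (w : E ⊗[𝕜] V) : Set ℝ :=
  {r | ∃ (n : ℕ) (x : Fin n → E) (v : Fin n → V),
    w = ∑ i, x i ⊗ₜ[𝕜] v i ∧ r = ∑ i, ‖x i‖ * p (v i)}

theorem projectiveCosts_nonempty (p : V → ℝ) (w : E ⊗[𝕜] V) :
    (projectiveCosts p w).Nonempty := by
  obtain ⟨n, x, v, rfl⟩ := exists_sum_tmul_eq w
  exact ⟨_, n, x, v, rfl, rfl⟩

theorem nonneg_of_mem_projectiveCosts (p : Seminorm 𝕜 V) {w : E ⊗[𝕜] V} {r : ℝ}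
    (hr : r ∈ projectiveCosts p w) : 0 ≤ r := by
  obtain ⟨n, x, v, -, rfl⟩ := hr
  exact Finset.sum_nonneg fun i _ => mul_nonneg (norm_nonneg _) (apply_nonneg p _)

theorem zero_mem_projectiveCosts (p : Seminorm 𝕜 V) :
    (0 : ℝ) ∈ projectiveCosts (𝕜 := 𝕜) (E := E) p 0 :=
  ⟨0, ![], ![], by simp, by simp⟩

theorem add_mem_add_projectiveCosts (p : V → ℝ) (w₁ w₂ : E ⊗[𝕜] V) :
    projectiveCosts p w₁ + projectiveCosts p w₂ ⊆ projectiveCosts p (w₁ + w₂) := by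
  rintro _ ⟨_, ⟨n₁, x₁, v₁, rfl, rfl⟩, _, ⟨n₂, x₂, v₂, rfl, rfl⟩, rfl⟩
  refine ⟨n₁ + n₂, Fin.append x₁ x₂, Fin.append v₁ v₂, ?_, ?_⟩ <;> simp [Fin.sum_univ_add]

theorem smul_mem_projectiveCosts (p : V → ℝ) (c : 𝕜) {w : E ⊗[𝕜] V} {r : ℝ}
    (hr : r ∈ projectiveCosts p w) : ‖c‖ * r ∈ projectiveCosts p (c • w) := by
  obtain ⟨n, x, v, rfl, rfl⟩ := hr
  refine ⟨n, fun i => c • x i, v, ?_, ?_⟩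
  · simp [Finset.smul_sum, smul_tmul']
  · simp [Finset.mul_sum, norm_smul, mul_assoc]

def projectiveNorm (p : V → ℝ) (w : E ⊗[𝕜] V) : ℝ := sInf (projectiveCosts p w)

theorem projectiveNorm_le_of_mem (p : Seminorm 𝕜 V) {w : E ⊗[𝕜] V} {r : ℝ}
    (hr : r ∈ projectiveCosts p w) : projectiveNorm p w ≤ r :=
  csInf_le ⟨0, fun _ => nonneg_of_mem_projectiveCosts p⟩ hr

theorem le_mul_projectiveNorm (p : V → ℝ) {w : E ⊗[𝕜] V} {a C : ℝ} (hC : 0 ≤ C)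
    (h : ∀ r ∈ projectiveCosts p w, a ≤ C * r) : a ≤ C * projectiveNorm p w := by
  rw [projectiveNorm, ← smul_eq_mul, ← Real.sInf_smul_of_nonneg hC]
  refine le_csInf ((projectiveCosts_nonempty p w).smul_set) ?_
  rintro _ ⟨r, hr, rfl⟩
  exact h r hr

theorem projectiveNorm_add_le (p : Seminorm 𝕜 V) (w₁ w₂ : E ⊗[𝕜] V) :
    projectiveNorm p (w₁ + w₂) ≤ projectiveNorm p w₁ + projectiveNorm p w₂ := by
  have hbdd : ∀ w : E ⊗[𝕜] V, BddBelow (projectiveCosts p w) :=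
    fun _ => ⟨0, fun _ => nonneg_of_mem_projectiveCosts p⟩
  rw [projectiveNorm, projectiveNorm, projectiveNorm, ← csInf_add (projectiveCosts_nonempty p w₁)
    (hbdd w₁) (projectiveCosts_nonempty p w₂) (hbdd w₂)]
  exact csInf_le_csInf (hbdd _) ((projectiveCosts_nonempty p w₁).add
    (projectiveCosts_nonempty p w₂)) (add_mem_add_projectiveCosts p w₁ w₂)

theorem projectiveNorm_smul_le (p : Seminorm 𝕜 V) (c : 𝕜) (w : E ⊗[𝕜] V) :
    projectiveNorm p (c • w) ≤ ‖c‖ * projectiveNorm p w :=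
  le_mul_projectiveNorm p (norm_nonneg c) fun _ hr =>
    projectiveNorm_le_of_mem p (smul_mem_projectiveCosts p c hr)

def projectiveSeminorm (p : Seminorm 𝕜 V) : Seminorm 𝕜 (E ⊗[𝕜] V) :=
  Seminorm.ofSMulLE (projectiveNorm p)
    (le_antisymm (projectiveNorm_le_of_mem p (zero_mem_projectiveCosts p))
      (le_csInf (projectiveCosts_nonempty p 0) fun _ => nonneg_of_mem_projectiveCosts p))
    (projectiveNorm_add_le p) (projectiveNorm_smul_le p)

theorem projectiveSeminorm_lTensor_le (p : Seminorm 𝕜 V) (q : Seminorm 𝕜 W) (T : V →ₗ[𝕜] W)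
    {C : ℝ} (hC : 0 ≤ C) (hT : ∀ v, q (T v) ≤ C * p v) (w : E ⊗[𝕜] V) :
    projectiveSeminorm q (T.lTensor E w) ≤ C * projectiveSeminorm p w := by
  refine le_mul_projectiveNorm p hC ?_
  rintro _ ⟨n, x, v, rfl, rfl⟩
  calc projectiveSeminorm q (T.lTensor E (∑ i, x i ⊗ₜ v i))
      ≤ ∑ i, ‖x i‖ * q (T (v i)) :=
        projectiveNorm_le_of_mem q ⟨n, x, fun i => T (v i), by simp, rfl⟩
    _ ≤ C * ∑ i, ‖x i‖ * p (v i) := by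
      rw [Finset.mul_sum]
      refine Finset.sum_le_sum fun i _ => ?_
      rw [mul_left_comm]
      exact mul_le_mul_of_nonneg_left (hT _) (norm_nonneg _)

theorem projectiveSeminorm_lTensor_le_of_le (p : Seminorm 𝕜 V) (q : Seminorm 𝕜 W) (T : V →ₗ[𝕜] W)
    (hT : ∀ v, q (T v) ≤ p v) (w : E ⊗[𝕜] V) :
    projectiveSeminorm q (T.lTensor E w) ≤ projectiveSeminorm p w :=
  (projectiveSeminorm_lTensor_le p q T zero_le_one (fun v => (hT v).trans_eq (one_mul _).symm)
    w).trans_eq (one_mul _)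

end Projective

section Definite

variable {𝕜 E V : Type*} [NontriviallyNormedField 𝕜] [SeminormedAddCommGroup E] [NormedSpace 𝕜 E]
  [AddCommGroup V] [Module 𝕜 V]

theorem seminorm_lid_rTensor_le (p : Seminorm 𝕜 V) (f : StrongDual 𝕜 E) (w : E ⊗[𝕜] V) :
    p (TensorProduct.lid 𝕜 V ((f : E →ₗ[𝕜] 𝕜).rTensor V w)) ≤ ‖f‖ * projectiveSeminorm p w := by
  refine le_mul_projectiveNorm p (norm_nonneg f) ?_
  rintro _ ⟨n, x, v, rfl, rfl⟩
  calc p (TensorProduct.lid 𝕜 V ((f : E →ₗ[𝕜] 𝕜).rTensor V (∑ i, x i ⊗ₜ v i)))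
      = p (∑ i, f (x i) • v i) := by simp
    _ ≤ ∑ i, ‖f (x i)‖ * p (v i) :=
      (Finset.le_sum_of_subadditive p (map_zero p).le (map_add_le_add p) _ _).trans_eq
        (by simp only [map_smul_eq_mul])
    _ ≤ ‖f‖ * ∑ i, ‖x i‖ * p (v i) := by
      rw [Finset.mul_sum]
      refine Finset.sum_le_sum fun i _ => ?_
      rw [← mul_assoc]
      exact mul_le_mul_of_nonneg_right (f.le_opNorm _) (apply_nonneg p _)

theorem eq_zero_of_forall_lid_rTensor_eq_zero [SeparatingDual 𝕜 E] {w : E ⊗[𝕜] V}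
    (h : ∀ f : StrongDual 𝕜 E, TensorProduct.lid 𝕜 V ((f : E →ₗ[𝕜] 𝕜).rTensor V w) = 0) :
    w = 0 := by
  classical
  let b := Module.Basis.ofVectorSpace 𝕜 V
  let e : E ⊗[𝕜] V ≃ₗ[𝕜] (Module.Basis.ofVectorSpaceIndex 𝕜 V →₀ E) :=
    (TensorProduct.congr (LinearEquiv.refl 𝕜 E) b.repr).trans
      (TensorProduct.finsuppScalarRight 𝕜 𝕜 E _)
  have coord : ∀ f : StrongDual 𝕜 E, ∀ j, ∀ u : E ⊗[𝕜] V,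
      f (e u j) = b.repr (TensorProduct.lid 𝕜 V ((f : E →ₗ[𝕜] 𝕜).rTensor V u)) j := by
    intro f j u
    induction u using TensorProduct.induction_on with
    | zero => simp
    | tmul x v => simp [e, finsuppScalarRight_apply_tmul_apply, mul_comm]
    | add u₁ u₂ h₁ h₂ => simp only [map_add, Finsupp.add_apply, h₁, h₂]
  refine e.map_eq_zero_iff.mp (Finsupp.ext fun j => ?_)
  show e w j = 0
  exact SeparatingDual.eq_zero_of_forall_dual_eq_zero fun f => by
    rw [coord, h f, map_zero, Finsupp.zero_apply]

theorem projectiveSeminorm_eq_zero_iff [SeparatingDual 𝕜 E] (p : Seminorm 𝕜 V)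
    (hp : ∀ v, p v = 0 → v = 0) {w : E ⊗[𝕜] V} : projectiveSeminorm p w = 0 ↔ w = 0 := by
  refine ⟨fun hw => eq_zero_of_forall_lid_rTensor_eq_zero fun f => hp _ ?_,
    fun hw => hw ▸ map_zero _⟩
  refine le_antisymm ?_ (apply_nonneg p _)
  simpa [hw] using seminorm_lid_rTensor_le p f w

end Definite

section Slice

variable {𝕜 L F : Type*} [NontriviallyNormedField 𝕜] [SeminormedAddCommGroup L] [NormedSpace 𝕜 L]
  [SeminormedAddCommGroup F] [NormedSpace 𝕜 F]

theorem norm_lid_rTensor_le (p : Seminorm 𝕜 (L ⊗[𝕜] F))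
    (hcontr : ∀ (a : L →L[𝕜] L) v, p ((a : L →ₗ[𝕜] L).rTensor F v) ≤ ‖a‖ * p v)
    {ξ : L} (hξ : ‖ξ‖ ≤ 1) (hund : ∀ y, p (ξ ⊗ₜ y) = ‖y‖) {φ : StrongDual 𝕜 L} (hφ : ‖φ‖ ≤ 1)
    (v : L ⊗[𝕜] F) : ‖TensorProduct.lid 𝕜 F ((φ : L →ₗ[𝕜] 𝕜).rTensor F v)‖ ≤ p v := by
  have hfactor : ((φ.smulRight ξ : L →L[𝕜] L) : L →ₗ[𝕜] L).rTensor F =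
      mk 𝕜 L F ξ ∘ₗ (TensorProduct.lid 𝕜 F).toLinearMap ∘ₗ (φ : L →ₗ[𝕜] 𝕜).rTensor F :=
    TensorProduct.ext' fun η y => by simp [smul_tmul]
  have hnorm : ‖φ.smulRight ξ‖ ≤ 1 := by
    rw [ContinuousLinearMap.norm_smulRight_apply]
    exact mul_le_one₀ hφ (norm_nonneg ξ) hξ
  calc ‖TensorProduct.lid 𝕜 F ((φ : L →ₗ[𝕜] 𝕜).rTensor F v)‖
      = p (((φ.smulRight ξ : L →L[𝕜] L) : L →ₗ[𝕜] L).rTensor F v) := by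
        rw [hfactor]; exact (hund _).symm
    _ ≤ ‖φ.smulRight ξ‖ * p v := hcontr _ v
    _ ≤ p v := mul_le_of_le_one_left (apply_nonneg p v) hnorm

end Slice

section Quantization

variable {𝕜 E L F : Type*} [RCLike 𝕜] [SeminormedAddCommGroup E] [NormedSpace 𝕜 E]
  [SeminormedAddCommGroup L] [NormedSpace 𝕜 L] [SeminormedAddCommGroup F] [NormedSpace 𝕜 F]

theorem projectiveSeminorm_lTensor_mk (p : Seminorm 𝕜 (L ⊗[𝕜] F))
    (hcontr : ∀ (a : L →L[𝕜] L) v, p ((a : L →ₗ[𝕜] L).rTensor F v) ≤ ‖a‖ * p v)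
    {ξ : L} (hξ : ‖ξ‖ = 1) (hund : ∀ y, p (ξ ⊗ₜ y) = ‖y‖) (u : E ⊗[𝕜] F) :
    projectiveSeminorm p ((mk 𝕜 L F ξ).lTensor E u) = projectiveSeminorm (normSeminorm 𝕜 F) u := by
  obtain ⟨φ, hφ, hφξ⟩ := exists_dual_vector 𝕜 ξ (by simp [hξ])
  let T : L ⊗[𝕜] F →ₗ[𝕜] F := (TensorProduct.lid 𝕜 F).toLinearMap ∘ₗ (φ : L →ₗ[𝕜] 𝕜).rTensor F
  have hT : T ∘ₗ mk 𝕜 L F ξ = LinearMap.id := LinearMap.ext fun y => by simp [T, hφξ, hξ]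
  refine le_antisymm (projectiveSeminorm_lTensor_le_of_le _ _ _ (fun y => (hund y).le) u) ?_
  calc projectiveSeminorm (normSeminorm 𝕜 F) u
      = projectiveSeminorm (normSeminorm 𝕜 F) (T.lTensor E ((mk 𝕜 L F ξ).lTensor E u)) := by
        rw [← LinearMap.lTensor_comp_apply, hT, LinearMap.lTensor_id, LinearMap.id_apply]
    _ ≤ projectiveSeminorm p ((mk 𝕜 L F ξ).lTensor E u) :=
      projectiveSeminorm_lTensor_le_of_le _ _ T
        (norm_lid_rTensor_le p hcontr hξ.le hund hφ.le) _

end Quantization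

theorem projective_quantization_general
    (L E F : Type*) [NormedAddCommGroup L] [NormedSpace ℂ L]
    [NormedAddCommGroup E] [NormedSpace ℂ E]
    [NormedAddCommGroup F] [NormedSpace ℂ F]
    (M : L ⊗[ℂ] F → ℝ)
    (hM0 : ∀ v : L ⊗[ℂ] F, M v = 0 ↔ v = 0)
    (hMadd : ∀ v w : L ⊗[ℂ] F, M (v + w) ≤ M v + M w)
    (hMsmul : ∀ (c : ℂ) (v : L ⊗[ℂ] F), M (c • v) = ‖c‖ * M v)
    (hMcontr : ∀ (a : L →L[ℂ] L) (v : L ⊗[ℂ] F),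
      M (LinearMap.rTensor F (a : L →ₗ[ℂ] L) v) ≤ ‖a‖ * M v)
    (hMund : ∀ (ξ : L) (y : F), ‖ξ‖ = 1 → M (ξ ⊗ₜ[ℂ] y) = ‖y‖)
    -- the projective norm on `E ⊗ (L ⊗ F)`, with `M` as the norm on the second factor
    (pn : E ⊗[ℂ] (L ⊗[ℂ] F) → ℝ)
    (hpn : ∀ w : E ⊗[ℂ] (L ⊗[ℂ] F), pn w = sInf {r : ℝ |
      ∃ (n : ℕ) (x : Fin n → E) (v : Fin n → L ⊗[ℂ] F),
        w = ∑ i, x i ⊗ₜ[ℂ] v i ∧ r = ∑ i, ‖x i‖ * M (v i)})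
    -- the projective norm on `E ⊗ F`
    (pf : E ⊗[ℂ] F → ℝ)
    (hpf : ∀ w : E ⊗[ℂ] F, pf w = sInf {r : ℝ |
      ∃ (n : ℕ) (x : Fin n → E) (y : Fin n → F),
        w = ∑ i, x i ⊗ₜ[ℂ] y i ∧ r = ∑ i, ‖x i‖ * ‖y i‖})
    -- the flip isomorphism β
    (β : L ⊗[ℂ] (E ⊗[ℂ] F) ≃ₗ[ℂ] E ⊗[ℂ] (L ⊗[ℂ] F))
    (hβ : ∀ (ξ : L) (x : E) (y : F), β (ξ ⊗ₜ[ℂ] (x ⊗ₜ[ℂ] y)) = x ⊗ₜ[ℂ] (ξ ⊗ₜ[ℂ] y)) :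
    -- the transported norm `N U := pn (β U)` is an `L`-norm on `E ⊗ F` ...
    (∀ U : L ⊗[ℂ] (E ⊗[ℂ] F), pn (β U) = 0 ↔ U = 0) ∧
    (∀ U V : L ⊗[ℂ] (E ⊗[ℂ] F), pn (β (U + V)) ≤ pn (β U) + pn (β V)) ∧
    (∀ (c : ℂ) (U : L ⊗[ℂ] (E ⊗[ℂ] F)), pn (β (c • U)) = ‖c‖ * pn (β U)) ∧
    (∀ (a : L →L[ℂ] L) (U : L ⊗[ℂ] (E ⊗[ℂ] F)),
      pn (β (LinearMap.rTensor (E ⊗[ℂ] F) (a : L →ₗ[ℂ] L) U)) ≤ ‖a‖ * pn (β U)) ∧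
    -- ... whose underlying norm is the projective tensor norm on `E ⊗ F`
    (∀ (ξ : L) (u : E ⊗[ℂ] F), ‖ξ‖ = 1 → pn (β (ξ ⊗ₜ[ℂ] u)) = pf u) := by
  let p : Seminorm ℂ (L ⊗[ℂ] F) := Seminorm.of M hMadd hMsmul
  obtain rfl : pn = projectiveSeminorm p := funext hpn
  obtain rfl : pf = projectiveSeminorm (normSeminorm ℂ F) := funext hpf
  obtain rfl : β = leftComm ℂ L E F :=
    LinearEquiv.toLinearMap_injective (ext_threefold' fun ξ x y => by simp [hβ])
  refine ⟨fun U => ?_, fun U V => ?_, fun c U => ?_, fun a U => ?_, fun ξ u hξ => ?_⟩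
  · rw [projectiveSeminorm_eq_zero_iff p fun v => (hM0 v).mp, LinearEquiv.map_eq_zero_iff]
  · rw [map_add]
    exact map_add_le_add _ _ _
  · rw [map_smul]
    exact map_smul_eq_mul _ _ _
  · rw [leftComm_rTensor]
    exact projectiveSeminorm_lTensor_le p p _ (norm_nonneg a) (hMcontr a) _
  · rw [leftComm_tmul_eq_lTensor_mk]
    exact projectiveSeminorm_lTensor_mk p hMcontr hξ (hMund ξ · hξ) u

/-- For a normed space `E` and a normed `L`-space `F`, the norm transported
to `L ⊗ (E ⊗ F)` from `E ⊗_π (L ⊗ F)` via the flip `β : ξ ⊗ (x ⊗ y) ↦ x ⊗ (ξ ⊗ y)`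
is an `L`-norm on `E ⊗ F` whose underlying norm is the projective tensor norm. -/
theorem projective_quantization
    (L E F : Type*) [NormedAddCommGroup L] [NormedSpace ℂ L] [Nontrivial L]
    [NormedAddCommGroup E] [NormedSpace ℂ E]
    [NormedAddCommGroup F] [NormedSpace ℂ F]
    (M : L ⊗[ℂ] F → ℝ)
    (hM0 : ∀ v : L ⊗[ℂ] F, M v = 0 ↔ v = 0)
    (hMadd : ∀ v w : L ⊗[ℂ] F, M (v + w) ≤ M v + M w)
    (hMsmul : ∀ (c : ℂ) (v : L ⊗[ℂ] F), M (c • v) = ‖c‖ * M v)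
    (hMcontr : ∀ (a : L →L[ℂ] L) (v : L ⊗[ℂ] F),
      M (LinearMap.rTensor F (a : L →ₗ[ℂ] L) v) ≤ ‖a‖ * M v)
    (hMund : ∀ (ξ : L) (y : F), ‖ξ‖ = 1 → M (ξ ⊗ₜ[ℂ] y) = ‖y‖)
    -- the projective norm on `E ⊗ (L ⊗ F)`, with `M` as the norm on the second factor
    (pn : E ⊗[ℂ] (L ⊗[ℂ] F) → ℝ)
    (hpn : ∀ w : E ⊗[ℂ] (L ⊗[ℂ] F), pn w = sInf {r : ℝ |
      ∃ (n : ℕ) (x : Fin n → E) (v : Fin n → L ⊗[ℂ] F),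
        w = ∑ i, x i ⊗ₜ[ℂ] v i ∧ r = ∑ i, ‖x i‖ * M (v i)})
    -- the projective norm on `E ⊗ F`
    (pf : E ⊗[ℂ] F → ℝ)
    (hpf : ∀ w : E ⊗[ℂ] F, pf w = sInf {r : ℝ |
      ∃ (n : ℕ) (x : Fin n → E) (y : Fin n → F),
        w = ∑ i, x i ⊗ₜ[ℂ] y i ∧ r = ∑ i, ‖x i‖ * ‖y i‖})
    -- the flip isomorphism β
    (β : L ⊗[ℂ] (E ⊗[ℂ] F) ≃ₗ[ℂ] E ⊗[ℂ] (L ⊗[ℂ] F))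
    (hβ : ∀ (ξ : L) (x : E) (y : F), β (ξ ⊗ₜ[ℂ] (x ⊗ₜ[ℂ] y)) = x ⊗ₜ[ℂ] (ξ ⊗ₜ[ℂ] y)) :
    -- the transported norm `N U := pn (β U)` is an `L`-norm on `E ⊗ F` ...
    (∀ U : L ⊗[ℂ] (E ⊗[ℂ] F), pn (β U) = 0 ↔ U = 0) ∧
    (∀ U V : L ⊗[ℂ] (E ⊗[ℂ] F), pn (β (U + V)) ≤ pn (β U) + pn (β V)) ∧
    (∀ (c : ℂ) (U : L ⊗[ℂ] (E ⊗[ℂ] F)), pn (β (c • U)) = ‖c‖ * pn (β U)) ∧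
    (∀ (a : L →L[ℂ] L) (U : L ⊗[ℂ] (E ⊗[ℂ] F)),
      pn (β (LinearMap.rTensor (E ⊗[ℂ] F) (a : L →ₗ[ℂ] L) U)) ≤ ‖a‖ * pn (β U)) ∧
    -- ... whose underlying norm is the projective tensor norm on `E ⊗ F`
    (∀ (ξ : L) (u : E ⊗[ℂ] F), ‖ξ‖ = 1 → pn (β (ξ ⊗ₜ[ℂ] u)) = pf u) :=
  projective_quantization_general L E F M hM0 hMadd hMsmul hMcontr hMund pn hpn pf hpf β hβ
end

section
/- Let E and F be normed L-spaces and f ∈ E*, g ∈ F* bounded functionals. Assume L carries a metric diamond operation ◇ : L × L → L (bilinear with ‖ξ ◇ η‖ = ‖ξ‖‖η‖). Then the bilinear functional f × g : E × F → ℂ, (x,y) ↦ f(x)g(y), is L-bounded with ‖(f × g)_∞‖ = ‖f‖·‖g‖, where (f × g)_∞ : (L ⊗ E) × (L ⊗ F) → L is determined by (ξ ⊗ x, η ⊗ y) ↦ f(x)g(y)(ξ ◇ η). -/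
/-!
The amplification factors as `amp u v = f_∞ u ◇ g_∞ v` with `f_∞ (ξ ⊗ x) = f x • ξ`, so the
upper bound reduces to `‖f_∞ u‖ ≤ ‖f‖ N u`. Take a norming functional `φ` of `f_∞ u` and a unit
vector `ξ`: the rank-one contraction `φ(·) ξ` sends `u` to an elementary tensor `ξ ⊗ w` with
`φ (f_∞ u) = f w`, hence `‖f_∞ u‖ = ‖f w‖ ≤ ‖f‖ N (ξ ⊗ w) ≤ ‖f‖ N u`. Testing the bound on
`ξ ⊗ x` and `ξ ⊗ y` gives `‖f x‖ ‖g y‖ ≤ C ‖x‖ ‖y‖`, hence `‖f‖ ‖g‖ ≤ C`.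
-/

open TensorProduct

namespace TensorProduct

section Algebraic

variable {R L L' P E F : Type*} [CommRing R]
  [AddCommGroup L] [Module R L] [AddCommGroup L'] [Module R L'] [AddCommGroup P] [Module R P]
  [AddCommGroup E] [Module R E] [AddCommGroup F] [Module R F]

noncomputable def functionalAmpl (L : Type*) [AddCommGroup L] [Module R L] (f : E →ₗ[R] R) :
    L ⊗[R] E →ₗ[R] L :=
  (TensorProduct.rid R L).toLinearMap ∘ₗ f.lTensor L

@[simp]
lemma functionalAmpl_tmul (f : E →ₗ[R] R) (ξ : L) (x : E) :
    functionalAmpl L f (ξ ⊗ₜ x) = f x • ξ := by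
  simp [functionalAmpl]

lemma apply_functionalAmpl (f : E →ₗ[R] R) (φ : L →ₗ[R] R) (u : L ⊗[R] E) :
    φ (functionalAmpl L f u) = f (TensorProduct.lid R E (φ.rTensor E u)) := by
  induction u using TensorProduct.induction_on with
  | zero => simp
  | tmul ξ x => simp [mul_comm]
  | add u v hu hv => simp [hu, hv]

lemma rTensor_smulRight (φ : L →ₗ[R] R) (ξ : L) (u : L ⊗[R] E) :
    (φ.smulRight ξ).rTensor E u = ξ ⊗ₜ TensorProduct.lid R E (φ.rTensor E u) := by
  induction u using TensorProduct.induction_on with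
  | zero => simp
  | tmul η x => simp [TensorProduct.smul_tmul]
  | add u v hu hv => simp [hu, hv, TensorProduct.tmul_add]

lemma eq_compl₁₂_functionalAmpl (f : E →ₗ[R] R) (g : F →ₗ[R] R) (d : L →ₗ[R] L' →ₗ[R] P)
    (amp : L ⊗[R] E →ₗ[R] L' ⊗[R] F →ₗ[R] P)
    (hamp : ∀ ξ η x y, amp (ξ ⊗ₜ x) (η ⊗ₜ y) = (f x * g y) • d ξ η) :
    amp = d.compl₁₂ (functionalAmpl L f) (functionalAmpl L' g) := by
  ext ξ x η y
  simp [hamp, mul_smul, smul_comm (f x)]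

end Algebraic

section Normed

variable {𝕜 L E : Type*} [RCLike 𝕜] [NormedAddCommGroup L] [NormedSpace 𝕜 L] [Nontrivial L]
  [NormedAddCommGroup E] [NormedSpace 𝕜 E]

lemma norm_functionalAmpl_le (f : E →L[𝕜] 𝕜) (N : L ⊗[𝕜] E → ℝ)
    (hcontr : ∀ (a : L →L[𝕜] L) u, N ((a : L →ₗ[𝕜] L).rTensor E u) ≤ ‖a‖ * N u)
    (hunit : ∀ (ξ : L) (x : E), ‖ξ‖ = 1 → N (ξ ⊗ₜ x) = ‖x‖) (u : L ⊗[𝕜] E) :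
    ‖functionalAmpl L (f : E →ₗ[𝕜] 𝕜) u‖ ≤ ‖f‖ * N u := by
  obtain ⟨z, hz⟩ := exists_ne (0 : L)
  obtain ⟨ξ, hξ⟩ : ∃ ξ : L, ‖ξ‖ = 1 := ⟨_, norm_smul_inv_norm (𝕜 := 𝕜) hz⟩
  obtain ⟨φ, hφ, hφu⟩ := exists_dual_vector' 𝕜 (functionalAmpl L (f : E →ₗ[𝕜] 𝕜) u)
  set w := TensorProduct.lid 𝕜 E ((φ : L →ₗ[𝕜] 𝕜).rTensor E u)
  have hrank_one : ((φ.smulRight ξ : L →L[𝕜] L) : L →ₗ[𝕜] L).rTensor E u = ξ ⊗ₜ w := by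
    rw [← rTensor_smulRight]; rfl
  have hφw : φ (functionalAmpl L (f : E →ₗ[𝕜] 𝕜) u) = f w :=
    apply_functionalAmpl _ (φ : L →ₗ[𝕜] 𝕜) u
  calc ‖functionalAmpl L (f : E →ₗ[𝕜] 𝕜) u‖
      = ‖f w‖ := by rw [← hφw, hφu, RCLike.norm_ofReal, abs_norm]
    _ ≤ ‖f‖ * N (ξ ⊗ₜ w) := by rw [hunit ξ w hξ]; exact f.le_opNorm w
    _ ≤ ‖f‖ * (‖φ.smulRight ξ‖ * N u) := by rw [← hrank_one]; gcongr; exact hcontr _ u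
    _ = ‖f‖ * N u := by rw [ContinuousLinearMap.norm_smulRight_apply, hφ, hξ, one_mul, one_mul]

end Normed

end TensorProduct

namespace ContinuousLinearMap

section

variable {𝕜 𝕜' E F : Type*} [NontriviallyNormedField 𝕜] [NontriviallyNormedField 𝕜']
  {σ : 𝕜 →+* 𝕜'} [SeminormedAddCommGroup E] [NormedSpace 𝕜 E]
  [SeminormedAddCommGroup F] [NormedSpace 𝕜' F]

lemma mul_opNorm_le_of_forall {a C : ℝ} (f : E →SL[σ] F) (ha : 0 ≤ a) (hC : 0 ≤ C)
    (h : ∀ x, a * ‖f x‖ ≤ C * ‖x‖) : a * ‖f‖ ≤ C := by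
  rcases ha.eq_or_lt with rfl | ha
  · simpa using hC
  rw [← le_div_iff₀' ha]
  refine f.opNorm_le_bound (by positivity) fun x ↦ ?_
  rw [div_mul_eq_mul_div, le_div_iff₀' ha]
  exact h x

end

section

variable {𝕜 E F G H : Type*} [NontriviallyNormedField 𝕜]
  [SeminormedAddCommGroup E] [NormedSpace 𝕜 E] [SeminormedAddCommGroup F] [NormedSpace 𝕜 F]
  [SeminormedAddCommGroup G] [NormedSpace 𝕜 G] [SeminormedAddCommGroup H] [NormedSpace 𝕜 H]

lemma opNorm_mul_opNorm_le_of_forall {C : ℝ} (f : E →L[𝕜] G) (g : F →L[𝕜] H) (hC : 0 ≤ C)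
    (h : ∀ x y, ‖f x‖ * ‖g y‖ ≤ C * (‖x‖ * ‖y‖)) : ‖f‖ * ‖g‖ ≤ C := by
  refine g.mul_opNorm_le_of_forall (norm_nonneg f) hC fun y ↦ ?_
  rw [mul_comm]
  refine f.mul_opNorm_le_of_forall (norm_nonneg _) (by positivity) fun x ↦ ?_
  linarith [h x y]

end

end ContinuousLinearMap

theorem bilinear_functional_L_bounded_general
    (L E F : Type*) [NormedAddCommGroup L] [NormedSpace ℂ L] [Nontrivial L]
    [NormedAddCommGroup E] [NormedSpace ℂ E]
    [NormedAddCommGroup F] [NormedSpace ℂ F]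
    -- the metric diamond operation
    (d : L →ₗ[ℂ] L →ₗ[ℂ] L) (hd : ∀ ξ η : L, ‖d ξ η‖ = ‖ξ‖ * ‖η‖)
    -- the L-norms on E and F
    (NE : L ⊗[ℂ] E → ℝ) (NF : L ⊗[ℂ] F → ℝ)
    (hNEcontr : ∀ (a : L →L[ℂ] L) u,
      NE (LinearMap.rTensor E (a : L →ₗ[ℂ] L) u) ≤ ‖a‖ * NE u)
    (hNEund : ∀ (ξ : L) (x : E), ‖ξ‖ = 1 → NE (ξ ⊗ₜ[ℂ] x) = ‖x‖)
    (hNFcontr : ∀ (a : L →L[ℂ] L) v,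
      NF (LinearMap.rTensor F (a : L →ₗ[ℂ] L) v) ≤ ‖a‖ * NF v)
    (hNFund : ∀ (ξ : L) (y : F), ‖ξ‖ = 1 → NF (ξ ⊗ₜ[ℂ] y) = ‖y‖)
    (f : E →L[ℂ] ℂ) (g : F →L[ℂ] ℂ)
    -- the amplification of f × g, determined on elementary tensors
    (amp : L ⊗[ℂ] E →ₗ[ℂ] L ⊗[ℂ] F →ₗ[ℂ] L)
    (hamp : ∀ (ξ η : L) (x : E) (y : F),
      amp (ξ ⊗ₜ[ℂ] x) (η ⊗ₜ[ℂ] y) = (f x * g y) • d ξ η) :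
    (∀ (u : L ⊗[ℂ] E) (v : L ⊗[ℂ] F), ‖amp u v‖ ≤ (‖f‖ * ‖g‖) * (NE u * NF v)) ∧
    (∀ C : ℝ, 0 ≤ C →
      (∀ (u : L ⊗[ℂ] E) (v : L ⊗[ℂ] F), ‖amp u v‖ ≤ C * (NE u * NF v)) →
      ‖f‖ * ‖g‖ ≤ C) := by
  refine ⟨fun u v ↦ ?_, fun C hC hbound ↦ ?_⟩
  · rw [TensorProduct.eq_compl₁₂_functionalAmpl _ _ d amp hamp, LinearMap.compl₁₂_apply, hd]
    have hfu := TensorProduct.norm_functionalAmpl_le f NE hNEcontr hNEund u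
    have hgv := TensorProduct.norm_functionalAmpl_le g NF hNFcontr hNFund v
    calc _ ≤ (‖f‖ * NE u) * (‖g‖ * NF v) :=
          mul_le_mul hfu hgv (norm_nonneg _) ((norm_nonneg _).trans hfu)
      _ = _ := by ring
  · obtain ⟨ξ, hξ⟩ := exists_norm_eq L zero_le_one
    refine f.opNorm_mul_opNorm_le_of_forall g hC fun x y ↦ ?_
    simpa [hamp, norm_smul, hd, hξ, hNEund _ _ hξ, hNFund _ _ hξ] using
      hbound (ξ ⊗ₜ x) (ξ ⊗ₜ y)

/-- For normed `L`-spaces `E, F` (with a metric diamond operation on `L`)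
and bounded functionals `f, g`, the bilinear functional `f × g` is `L`-bounded with
`‖(f × g)_∞‖ = ‖f‖ * ‖g‖` (stated as: `‖f‖‖g‖` is the least bound). -/
theorem bilinear_functional_L_bounded
    (L E F : Type*) [NormedAddCommGroup L] [NormedSpace ℂ L] [Nontrivial L]
    [NormedAddCommGroup E] [NormedSpace ℂ E]
    [NormedAddCommGroup F] [NormedSpace ℂ F]
    -- the metric diamond operation
    (d : L →ₗ[ℂ] L →ₗ[ℂ] L) (hd : ∀ ξ η : L, ‖d ξ η‖ = ‖ξ‖ * ‖η‖)
    -- the L-norms on E and F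
    (NE : L ⊗[ℂ] E → ℝ) (NF : L ⊗[ℂ] F → ℝ)
    (hNE0 : ∀ u, NE u = 0 ↔ u = 0)
    (hNEadd : ∀ u v, NE (u + v) ≤ NE u + NE v)
    (hNEsmul : ∀ (c : ℂ) u, NE (c • u) = ‖c‖ * NE u)
    (hNEcontr : ∀ (a : L →L[ℂ] L) u,
      NE (LinearMap.rTensor E (a : L →ₗ[ℂ] L) u) ≤ ‖a‖ * NE u)
    (hNEund : ∀ (ξ : L) (x : E), ‖ξ‖ = 1 → NE (ξ ⊗ₜ[ℂ] x) = ‖x‖)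
    (hNF0 : ∀ v, NF v = 0 ↔ v = 0)
    (hNFadd : ∀ u v, NF (u + v) ≤ NF u + NF v)
    (hNFsmul : ∀ (c : ℂ) v, NF (c • v) = ‖c‖ * NF v)
    (hNFcontr : ∀ (a : L →L[ℂ] L) v,
      NF (LinearMap.rTensor F (a : L →ₗ[ℂ] L) v) ≤ ‖a‖ * NF v)
    (hNFund : ∀ (ξ : L) (y : F), ‖ξ‖ = 1 → NF (ξ ⊗ₜ[ℂ] y) = ‖y‖)
    (f : E →L[ℂ] ℂ) (g : F →L[ℂ] ℂ)
    -- the amplification of f × g, determined on elementary tensors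
    (amp : L ⊗[ℂ] E →ₗ[ℂ] L ⊗[ℂ] F →ₗ[ℂ] L)
    (hamp : ∀ (ξ η : L) (x : E) (y : F),
      amp (ξ ⊗ₜ[ℂ] x) (η ⊗ₜ[ℂ] y) = (f x * g y) • d ξ η) :
    (∀ (u : L ⊗[ℂ] E) (v : L ⊗[ℂ] F), ‖amp u v‖ ≤ (‖f‖ * ‖g‖) * (NE u * NF v)) ∧
    (∀ C : ℝ, 0 ≤ C →
      (∀ (u : L ⊗[ℂ] E) (v : L ⊗[ℂ] F), ‖amp u v‖ ≤ C * (NE u * NF v)) →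
      ‖f‖ * ‖g‖ ≤ C) :=
  bilinear_functional_L_bounded_general L E F d hd NE NF hNEcontr hNEund hNFcontr hNFund f g amp
    hamp
end

section
/- Let L be a normed space with a metric bilinear operation ◇ (‖ξ◇η‖ = ‖ξ‖‖η‖) and E, F linear spaces. Every element U of L ⊗ (E ⊗ F) can be written as U = Σ_{k=1}^n a_k · (u_k ◇ v_k) for some n ∈ ℕ, a_k ∈ B(L), u_k ∈ L ⊗ E, v_k ∈ L ⊗ F, where u ◇ v denotes the bilinear extension determined by (ξ ⊗ x) ◇ (η ⊗ y) := (ξ ◇ η) ⊗ (x ⊗ y), and a · (ζ ⊗ w) := a(ζ) ⊗ w. -/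
/-!
Metricity makes `ζ := ξ₀ ◇ ξ₀` nonzero for any `ξ₀ ≠ 0`, and by Hahn–Banach some `a ∈ B(L)` maps
`ζ` to an arbitrary `ξ`. Hence every pure tensor `ξ ⊗ (x ⊗ y) = a · ((ξ₀ ⊗ x) ◇ (ξ₀ ⊗ y))` is of
the form `a · (u ◇ v)`. Such elements are closed under scalars (absorbed into `a`) and span
`L ⊗ (E ⊗ F)`, so every element is a finite sum of them.
-/

open TensorProduct

/-- The extended diamond operation `(ξ ⊗ x) ◇ (η ⊗ y) = (ξ ◇ η) ⊗ (x ⊗ y)` on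
amplifications. -/
noncomputable def diamondT {L E F : Type*}
    [AddCommGroup L] [Module ℂ L] [AddCommGroup E] [Module ℂ E]
    [AddCommGroup F] [Module ℂ F]
    (d : L →ₗ[ℂ] L →ₗ[ℂ] L) (u : L ⊗[ℂ] E) (v : L ⊗[ℂ] F) : L ⊗[ℂ] (E ⊗[ℂ] F) :=
  TensorProduct.map (TensorProduct.lift d) LinearMap.id
    (TensorProduct.tensorTensorTensorComm ℂ L E L F (u ⊗ₜ[ℂ] v))

theorem Submodule.exists_fin_sum_eq_of_span_eq_top {R M : Type*} [Semiring R] [AddCommMonoid M]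
    [Module R M] {s : Set M} (hs : span R s = ⊤) (hsmul : ∀ c : R, ∀ x ∈ s, c • x ∈ s) (m : M) :
    ∃ (n : ℕ) (g : Fin n → M), (∀ i, g i ∈ s) ∧ m = ∑ i, g i := by
  obtain ⟨n, c, g, hm⟩ := mem_span_set'.1 (hs ▸ mem_top : m ∈ span R s)
  exact ⟨n, fun i ↦ c i • (g i : M), fun i ↦ hsmul _ _ (g i).2, hm.symm⟩

theorem TensorProduct.span_tmul_tmul_eq_top (R M N P : Type*) [CommSemiring R]
    [AddCommMonoid M] [AddCommMonoid N] [AddCommMonoid P] [Module R M] [Module R N] [Module R P] :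
    Submodule.span R {t : M ⊗[R] (N ⊗[R] P) | ∃ m n p, m ⊗ₜ (n ⊗ₜ p) = t} = ⊤ := by
  refine eq_top_iff.2 (span_tmul_eq_top R M (N ⊗[R] P) ▸ Submodule.span_le.2 ?_)
  rintro _ ⟨m, t, rfl⟩
  induction t with
  | zero => simp
  | tmul n p => exact Submodule.subset_span ⟨m, n, p, rfl⟩
  | add t₁ t₂ h₁ h₂ => rw [tmul_add]; exact add_mem h₁ h₂

section DiamondProducts

variable {L : Type*} [AddCommGroup L] [Module ℂ L] (d : L →ₗ[ℂ] L →ₗ[ℂ] L)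
  {E F : Type*} [AddCommGroup E] [Module ℂ E] [AddCommGroup F] [Module ℂ F]

theorem diamondT_tmul (ξ η : L) (x : E) (y : F) :
    diamondT d (ξ ⊗ₜ[ℂ] x) (η ⊗ₜ[ℂ] y) = d ξ η ⊗ₜ[ℂ] (x ⊗ₜ[ℂ] y) := by
  simp [diamondT]

variable [TopologicalSpace L]

variable (E F) in
def diamondProducts : Set (L ⊗[ℂ] (E ⊗[ℂ] F)) :=
  {U | ∃ (a : L →L[ℂ] L) (u : L ⊗[ℂ] E) (v : L ⊗[ℂ] F),
    LinearMap.rTensor (E ⊗[ℂ] F) (a : L →ₗ[ℂ] L) (diamondT d u v) = U}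

theorem smul_mem_diamondProducts [ContinuousConstSMul ℂ L] (c : ℂ) {U : L ⊗[ℂ] (E ⊗[ℂ] F)}
    (hU : U ∈ diamondProducts d E F) : c • U ∈ diamondProducts d E F := by
  obtain ⟨a, u, v, rfl⟩ := hU
  exact ⟨c • a, u, v, by simp [LinearMap.rTensor_smul]⟩

theorem tmul_tmul_mem_diamondProducts [ContinuousSMul ℂ L] [SeparatingDual ℂ L] {ξ₀ η₀ : L}
    (h : d ξ₀ η₀ ≠ 0) (ξ : L) (x : E) (y : F) :
    ξ ⊗ₜ[ℂ] (x ⊗ₜ[ℂ] y) ∈ diamondProducts d E F := by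
  obtain ⟨f, hf⟩ := SeparatingDual.exists_eq_one (R := ℂ) h
  exact ⟨f.smulRight ξ, ξ₀ ⊗ₜ x, η₀ ⊗ₜ y, by simp [diamondT_tmul, hf]⟩

theorem span_diamondProducts_eq_top [ContinuousSMul ℂ L] [SeparatingDual ℂ L] {ξ₀ η₀ : L}
    (h : d ξ₀ η₀ ≠ 0) : Submodule.span ℂ (diamondProducts d E F) = ⊤ := by
  rw [eq_top_iff, ← span_tmul_tmul_eq_top ℂ L E F]
  refine Submodule.span_mono ?_
  rintro _ ⟨ξ, x, y, rfl⟩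
  exact tmul_tmul_mem_diamondProducts d h ξ x y

end DiamondProducts

/-- If `L` carries a metric diamond operation, every element `U` of
`L ⊗ (E ⊗ F)` can be written as `Σ_k a_k · (u_k ◇ v_k)` with `a_k ∈ B(L)`,
`u_k ∈ L ⊗ E`, `v_k ∈ L ⊗ F`. -/
theorem exists_diamond_representation
    (L E F : Type*) [NormedAddCommGroup L] [NormedSpace ℂ L] [Nontrivial L]
    [AddCommGroup E] [Module ℂ E] [AddCommGroup F] [Module ℂ F]
    (d : L →ₗ[ℂ] L →ₗ[ℂ] L) (hd : ∀ ξ η : L, ‖d ξ η‖ = ‖ξ‖ * ‖η‖) :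
    ∀ U : L ⊗[ℂ] (E ⊗[ℂ] F),
      ∃ (n : ℕ) (a : Fin n → (L →L[ℂ] L)) (u : Fin n → L ⊗[ℂ] E) (v : Fin n → L ⊗[ℂ] F),
        U = ∑ k, LinearMap.rTensor (E ⊗[ℂ] F) ((a k : L →ₗ[ℂ] L)) (diamondT d (u k) (v k)) := by
  obtain ⟨ξ₀, hξ₀⟩ := exists_ne (0 : L)
  have hdξ₀ : d ξ₀ ξ₀ ≠ 0 := by
    rw [← norm_ne_zero_iff, hd]
    exact mul_ne_zero (norm_ne_zero_iff.2 hξ₀) (norm_ne_zero_iff.2 hξ₀)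
  intro U
  obtain ⟨n, g, hg, rfl⟩ := Submodule.exists_fin_sum_eq_of_span_eq_top
    (span_diamondProducts_eq_top d hdξ₀) (smul_mem_diamondProducts d) U
  choose a u v hg using hg
  exact ⟨n, a, u, v, by simp only [hg]⟩
end

section
/- Let 1 < p < ∞ and let ℓ_1 carry its maximal L_p-quantization (projective tensor norm on L_p ⊗ ℓ_1, with L_p = ℓ_p). Then (ℓ_1)_max is not p-convex: there exist u, v ∈ ℓ_p ⊗ ℓ_1 with orthogonal proper supports such that ‖u + v‖_π > (‖u‖_π^p + ‖v‖_π^p)^{1/p}. -/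
open TensorProduct
open scoped ENNReal Classical

instance : Fact ((1 : ℝ≥0∞) ≤ 1) := ⟨le_rfl⟩

/-- The projective tensor norm on the algebraic tensor product of two normed spaces. -/
noncomputable def projNorm {A B : Type*} [NormedAddCommGroup A] [NormedSpace ℂ A]
    [NormedAddCommGroup B] [NormedSpace ℂ B] (w : A ⊗[ℂ] B) : ℝ :=
  sInf {r : ℝ | ∃ (n : ℕ) (x : Fin n → A) (y : Fin n → B),
    w = ∑ i, x i ⊗ₜ[ℂ] y i ∧ r = ∑ i, ‖x i‖ * ‖y i‖}

/-!
The diagonal tensors `eₖ ⊗ fₖ` of the unit vectors of `ℓ_p` and `ℓ_1` have projective norm at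
most `1`, while `e₀ ⊗ f₀ + e₁ ⊗ f₁` has projective norm at least `2`: the functional
`x ⊗ y ↦ x₀ y₀ + x₁ y₁` is dominated by `‖x‖_p ‖y‖_1`, because `|xₖ| ≤ ‖x‖_p` and
`|y₀| + |y₁| ≤ ‖y‖_1`, and it takes the value `2` there. Since `2^{1/p} < 2` for `p > 1`, the two
tensors, supported on the coordinates `0` and `1`, violate `p`-convexity.
-/

theorem TensorProduct.exists_eq_sum_tmul_fin {R M N : Type*} [CommSemiring R]
    [AddCommMonoid M] [Module R M] [AddCommMonoid N] [Module R N] (w : M ⊗[R] N) :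
    ∃ (n : ℕ) (x : Fin n → M) (y : Fin n → N), w = ∑ i, x i ⊗ₜ[R] y i := by
  induction w with
  | zero => exact ⟨0, Fin.elim0, Fin.elim0, by simp⟩
  | tmul a b => exact ⟨1, fun _ => a, fun _ => b, by simp⟩
  | add w w' hw hw' =>
    obtain ⟨n, x, y, rfl⟩ := hw
    obtain ⟨n', x', y', rfl⟩ := hw'
    exact ⟨n + n', Fin.append x x', Fin.append y y', by simp [Fin.sum_univ_add]⟩

section ProjNorm

variable {A B : Type*} [NormedAddCommGroup A] [NormedSpace ℂ A]
  [NormedAddCommGroup B] [NormedSpace ℂ B]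

theorem projNorm_nonneg (w : A ⊗[ℂ] B) : 0 ≤ projNorm w := by
  refine Real.sInf_nonneg ?_
  rintro r ⟨n, x, y, -, rfl⟩
  exact Finset.sum_nonneg fun i _ => mul_nonneg (norm_nonneg _) (norm_nonneg _)

theorem projNorm_le_sum {n : ℕ} (x : Fin n → A) (y : Fin n → B) :
    projNorm (∑ i, x i ⊗ₜ[ℂ] y i) ≤ ∑ i, ‖x i‖ * ‖y i‖ := by
  refine csInf_le ⟨0, ?_⟩ ⟨n, x, y, rfl, rfl⟩
  rintro r ⟨n, x, y, -, rfl⟩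
  exact Finset.sum_nonneg fun i _ => mul_nonneg (norm_nonneg _) (norm_nonneg _)

theorem projNorm_tmul_le (x : A) (y : B) : projNorm (x ⊗ₜ[ℂ] y) ≤ ‖x‖ * ‖y‖ := by
  simpa using projNorm_le_sum (fun _ : Fin 1 => x) (fun _ => y)

theorem norm_lift_le_projNorm (φ : A →ₗ[ℂ] B →ₗ[ℂ] ℂ) (hφ : ∀ x y, ‖φ x y‖ ≤ ‖x‖ * ‖y‖)
    (w : A ⊗[ℂ] B) : ‖lift φ w‖ ≤ projNorm w := by
  obtain ⟨n, x, y, hw⟩ := w.exists_eq_sum_tmul_fin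
  refine le_csInf ⟨_, n, x, y, hw, rfl⟩ ?_
  rintro r ⟨m, x', y', rfl, rfl⟩
  calc ‖lift φ (∑ i, x' i ⊗ₜ[ℂ] y' i)‖ = ‖∑ i, φ (x' i) (y' i)‖ := by simp
    _ ≤ ∑ i, ‖φ (x' i) (y' i)‖ := norm_sum_le _ _
    _ ≤ ∑ i, ‖x' i‖ * ‖y' i‖ := Finset.sum_le_sum fun i _ => hφ _ _

end ProjNorm

namespace lp

variable {ι : Type*} {p : ℝ≥0∞}

noncomputable def diagPairing (s : Finset ι) :
    lp (fun _ : ι => ℂ) p →ₗ[ℂ] lp (fun _ : ι => ℂ) 1 →ₗ[ℂ] ℂ :=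
  LinearMap.mk₂ ℂ (fun x y => ∑ k ∈ s, x k * y k)
    (by intros; simp [add_mul, Finset.sum_add_distrib])
    (by intros; simp [mul_assoc, Finset.mul_sum])
    (by intros; simp [mul_add, Finset.sum_add_distrib])
    (by intros; simp [mul_left_comm, Finset.mul_sum])

theorem diagPairing_apply (s : Finset ι) (x : lp (fun _ : ι => ℂ) p)
    (y : lp (fun _ : ι => ℂ) 1) : diagPairing s x y = ∑ k ∈ s, x k * y k :=
  rfl

theorem norm_diagPairing_le [Fact (1 ≤ p)] (s : Finset ι) (x : lp (fun _ : ι => ℂ) p)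
    (y : lp (fun _ : ι => ℂ) 1) : ‖diagPairing s x y‖ ≤ ‖x‖ * ‖y‖ := by
  have hp : p ≠ 0 := (zero_lt_one.trans_le Fact.out).ne'
  have hy : ∑ k ∈ s, ‖y k‖ ≤ ‖y‖ := by
    simpa using sum_rpow_le_norm_rpow (p := 1) (by norm_num) y s
  calc ‖diagPairing s x y‖ ≤ ∑ k ∈ s, ‖x k‖ * ‖y k‖ := by
        simpa [diagPairing_apply] using norm_sum_le s fun k => x k * y k
    _ ≤ ∑ k ∈ s, ‖x‖ * ‖y k‖ := by
        gcongr with k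
        exact norm_apply_le_norm hp x k
    _ = ‖x‖ * ∑ k ∈ s, ‖y k‖ := Finset.mul_sum _ _ _ |>.symm
    _ ≤ ‖x‖ * ‖y‖ := by gcongr

theorem diagPairing_single_single [DecidableEq ι] (s : Finset ι) {k : ι} (hk : k ∈ s) :
    diagPairing (p := p) s (lp.single p k (1 : ℂ)) (lp.single 1 k (1 : ℂ)) = 1 := by
  rw [diagPairing_apply, Finset.sum_eq_single_of_mem k hk]
  · simp
  · intro j _ hj
    simp [hj]

theorem card_le_projNorm_sum_single_tmul_single [DecidableEq ι] [Fact (1 ≤ p)] (s : Finset ι) :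
    (s.card : ℝ) ≤ projNorm (∑ k ∈ s, lp.single p k (1 : ℂ) ⊗ₜ[ℂ] lp.single 1 k (1 : ℂ)) := by
  have hlift : ∀ k ∈ s,
      lift (diagPairing s) (lp.single p k (1 : ℂ) ⊗ₜ[ℂ] lp.single 1 k (1 : ℂ)) = 1 :=
    fun k hk => by rw [lift.tmul, diagPairing_single_single s hk]
  calc (s.card : ℝ) = ‖lift (diagPairing s)
        (∑ k ∈ s, lp.single p k (1 : ℂ) ⊗ₜ[ℂ] lp.single 1 k (1 : ℂ))‖ := by
        rw [map_sum, Finset.sum_congr rfl hlift]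
        simp
    _ ≤ _ := norm_lift_le_projNorm (diagPairing (p := p) s) (norm_diagPairing_le s) _

theorem apply_single_of_mem [DecidableEq ι] [Fact (1 ≤ p)] {S : Set ι}
    (P : lp (fun _ : ι => ℂ) p →L[ℂ] lp (fun _ : ι => ℂ) p)
    (hP : ∀ f k, P f k = if k ∈ S then f k else 0) {i : ι} (hi : i ∈ S) (c : ℂ) :
    P (lp.single p i c) = lp.single p i c := by
  ext k
  rw [hP]
  by_cases hk : k = i
  · simp [hk, hi]
  · simp [hk, lp.single_apply]

end lp

theorem rpow_add_rpow_rpow_one_div_lt_two {a b q : ℝ} (ha : 0 ≤ a) (ha1 : a ≤ 1) (hb : 0 ≤ b)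
    (hb1 : b ≤ 1) (hq : 1 < q) : (a ^ q + b ^ q) ^ (1 / q) < 2 := by
  have hq0 : 0 < q := zero_lt_one.trans hq
  calc (a ^ q + b ^ q) ^ (1 / q) ≤ (1 + 1) ^ (1 / q) := by
        gcongr
        · exact Real.rpow_le_one ha ha1 hq0.le
        · exact Real.rpow_le_one hb hb1 hq0.le
    _ < (2 : ℝ) ^ (1 : ℝ) := by
        norm_num
        exact Real.rpow_lt_self_of_one_lt one_lt_two (inv_lt_one_of_one_lt₀ hq)
    _ = 2 := Real.rpow_one 2

/-- For `1 < p < ∞`, the maximal `ℓ_p`-quantization of `ℓ_1` (projective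
norm on `ℓ_p ⊗ ℓ_1`) is not `p`-convex: there are `u, v` with orthogonal proper
(coordinate) supports violating the `p`-convexity inequality. -/
theorem max_quantization_ell_one_not_p_convex
    (p : ℝ≥0∞) (hp1 : 1 < p) (hp2 : p < ∞) [Fact (1 ≤ p)]
    -- the coordinate projections on ℓ_p
    (Pc : Set ℕ → (lp (fun _ : ℕ => ℂ) p →L[ℂ] lp (fun _ : ℕ => ℂ) p))
    (hPc : ∀ (S : Set ℕ) (f : lp (fun _ : ℕ => ℂ) p) (k : ℕ),
      (Pc S f) k = if k ∈ S then f k else 0) :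
    ∃ (u v : (lp (fun _ : ℕ => ℂ) p) ⊗[ℂ] (lp (fun _ : ℕ => ℂ) 1)) (S T : Set ℕ),
      Disjoint S T ∧
      LinearMap.rTensor (lp (fun _ : ℕ => ℂ) 1)
        ((Pc S : _ →L[ℂ] _) : _ →ₗ[ℂ] _) u = u ∧
      LinearMap.rTensor (lp (fun _ : ℕ => ℂ) 1)
        ((Pc T : _ →L[ℂ] _) : _ →ₗ[ℂ] _) v = v ∧
      (projNorm u ^ p.toReal + projNorm v ^ p.toReal) ^ (1 / p.toReal)
        < projNorm (u + v) := by
  have hq : 1 < p.toReal := by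
    simpa using (ENNReal.toReal_lt_toReal ENNReal.one_ne_top hp2.ne).mpr hp1
  set e : ℕ → lp (fun _ : ℕ => ℂ) p ⊗[ℂ] lp (fun _ : ℕ => ℂ) 1 :=
    fun k => lp.single p k (1 : ℂ) ⊗ₜ[ℂ] lp.single 1 k (1 : ℂ)
  have he_le : ∀ k, projNorm (e k) ≤ 1 := fun k => (projNorm_tmul_le _ _).trans <| by
    simp [lp.norm_single (zero_lt_one.trans hp1), lp.norm_single zero_lt_one]
  have he_supp : ∀ (S : Set ℕ) k, k ∈ S → (Pc S : _ →ₗ[ℂ] _).rTensor _ (e k) = e k :=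
    fun S k hk => by
      rw [LinearMap.rTensor_tmul, ContinuousLinearMap.coe_coe]
      exact congrArg (· ⊗ₜ[ℂ] _) (lp.apply_single_of_mem (Pc S) (hPc S) hk 1)
  refine ⟨e 0, e 1, {0}, {1}, by simp, he_supp _ 0 rfl, he_supp _ 1 rfl, ?_⟩
  calc _ < 2 := rpow_add_rpow_rpow_one_div_lt_two (projNorm_nonneg _) (he_le 0)
        (projNorm_nonneg _) (he_le 1) hq
    _ ≤ projNorm (e 0 + e 1) := by
        have h := lp.card_le_projNorm_sum_single_tmul_single (p := p) {0, 1}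
        rw [Finset.sum_pair zero_ne_one, Finset.card_pair zero_ne_one, Nat.cast_two] at h
        exact h
end

section
/- Let 1 ≤ p ≤ ∞, let L = L_p(X) for a measure space X, and let I₁,…,I_n ∈ B(L) be pairwise disjoint proper isometries (isometries whose images are L_p(X'_k) for pairwise almost-disjoint measurable X'_k ⊆ X). For a_k ∈ B(L) define I_k^⋆ := I_k^{-1} P_{X'_k}. Then ‖Σ_{k=1}^n a_k I_k^⋆‖ ≤ (Σ_{k=1}^n ‖a_k‖^q)^{1/q}, where q is the conjugate exponent of p (with the conventions q = ∞ for p = 1 and q = 1 for p = ∞). -/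
/-!
Write `P_k` for the indicator projection onto `L_p(A_k)`. Since `I_k` maps isometrically onto
`L_p(A_k)`, `‖I_k^⋆ f‖ = ‖P_k f‖`, so `‖Σ a_k I_k^⋆ f‖ ≤ Σ ‖a_k‖ ‖P_k f‖`. Disjointness of the
`A_k` gives `Σ ‖P_k f‖^p ≤ ‖f‖^p`, and Hölder's inequality for finite sums finishes the proof
(for `p = ∞` one only needs `‖P_k f‖ ≤ ‖f‖`).
-/

open MeasureTheory Function
open scoped ENNReal

theorem norm_apply_eq_norm_of_isometry_leftInverse {E F : Type*} [Norm E] [Norm F]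
    {I : E → F} {J : F → E} {Q : F → F} (hI : ∀ f, ‖I f‖ = ‖f‖) (hJI : ∀ f, J (I f) = f)
    (hJQ : ∀ g, J (Q g) = J g) (hQ : ∀ g, ∃ f, I f = Q g) (g : F) :
    ‖J g‖ = ‖Q g‖ := by
  obtain ⟨f, hf⟩ := hQ g
  rw [← hJQ, ← hf, hJI, hI]

theorem ContinuousLinearMap.norm_sum_comp_apply_le {ι 𝕜 E F G : Type*}
    [NontriviallyNormedField 𝕜] [SeminormedAddCommGroup E] [SeminormedAddCommGroup F]
    [SeminormedAddCommGroup G] [NormedSpace 𝕜 E] [NormedSpace 𝕜 F] [NormedSpace 𝕜 G]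
    (s : Finset ι) (a : ι → F →L[𝕜] G) (J : ι → E →L[𝕜] F) (f : E) :
    ‖(∑ k ∈ s, (a k).comp (J k)) f‖ ≤ ∑ k ∈ s, ‖a k‖ * ‖J k f‖ := by
  rw [sum_apply]
  exact (norm_sum_le _ _).trans (Finset.sum_le_sum fun k _ => (a k).le_opNorm (J k f))

theorem Real.sum_mul_le_of_sum_rpow_le {ι : Type*} (s : Finset ι) {p q : ℝ}
    (hpq : p.HolderConjugate q) {c x : ι → ℝ} (hc : ∀ i ∈ s, 0 ≤ c i) (hx : ∀ i ∈ s, 0 ≤ x i)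
    {y : ℝ} (hy : 0 ≤ y) (hxy : ∑ i ∈ s, x i ^ p ≤ y ^ p) :
    ∑ i ∈ s, c i * x i ≤ (∑ i ∈ s, c i ^ q) ^ (1 / q) * y := by
  calc ∑ i ∈ s, c i * x i ≤ (∑ i ∈ s, c i ^ q) ^ (1 / q) * (∑ i ∈ s, x i ^ p) ^ (1 / p) :=
        Real.inner_le_Lp_mul_Lq_of_nonneg s hpq.symm hc hx
    _ ≤ (∑ i ∈ s, c i ^ q) ^ (1 / q) * (y ^ p) ^ (1 / p) :=
        mul_le_mul_of_nonneg_left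
          (Real.rpow_le_rpow (Finset.sum_nonneg fun i hi => Real.rpow_nonneg (hx i hi) p) hxy
            (one_div_nonneg.2 hpq.nonneg))
          (Real.rpow_nonneg (Finset.sum_nonneg fun i hi => Real.rpow_nonneg (hc i hi) q) _)
    _ = (∑ i ∈ s, c i ^ q) ^ (1 / q) * y := by rw [one_div p, Real.rpow_rpow_inv hy hpq.ne_zero]

namespace MeasureTheory

variable {X E : Type*} [MeasurableSpace X] {μ : Measure X} [NormedAddCommGroup E] {p : ℝ≥0∞}

theorem sum_eLpNorm_indicator_rpow_le {ι : Type*} [Fintype ι] (hp0 : p ≠ 0) (hp : p ≠ ∞)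
    {A : ι → Set X} (hA : ∀ k, MeasurableSet (A k)) (hdisj : Pairwise (AEDisjoint μ on A))
    (f : X → E) :
    ∑ k, eLpNorm ((A k).indicator f) p μ ^ p.toReal ≤ eLpNorm f p μ ^ p.toReal := by
  have hr : 0 < p.toReal := ENNReal.toReal_pos hp0 hp
  simp_rw [eLpNorm_indicator_eq_eLpNorm_restrict (hA _), eLpNorm_eq_eLpNorm' hp0 hp,
    ← lintegral_rpow_enorm_eq_rpow_eLpNorm' hr]
  calc ∑ k, ∫⁻ x in A k, ‖f x‖ₑ ^ p.toReal ∂μ = ∫⁻ x in ⋃ k, A k, ‖f x‖ₑ ^ p.toReal ∂μ := by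
        rw [lintegral_iUnion₀ (fun k => (hA k).nullMeasurableSet) hdisj, tsum_fintype]
    _ ≤ ∫⁻ x, ‖f x‖ₑ ^ p.toReal ∂μ := setLIntegral_le_lintegral _ _

namespace Lp

variable {s : Set X}

theorem norm_le_of_ae_eq_indicator {f g : Lp E p μ} (hg : g =ᵐ[μ] s.indicator f) :
    ‖g‖ ≤ ‖f‖ := by
  rw [Lp.norm_def, Lp.norm_def, eLpNorm_congr_ae hg]
  exact ENNReal.toReal_mono (eLpNorm_ne_top f) (eLpNorm_indicator_le _)

theorem apply_apply_of_ae_eq_indicator {P : Lp E p μ → Lp E p μ}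
    (hP : ∀ f, P f =ᵐ[μ] s.indicator f) (f : Lp E p μ) : P (P f) = P f := by
  apply Lp.ext
  filter_upwards [hP (P f), hP f] with x hPPx hPx
  by_cases hx : x ∈ s <;> simp [hPPx, hPx, hx]

theorem sum_norm_rpow_le_of_ae_eq_indicator {ι : Type*} [Fintype ι] (hp0 : p ≠ 0) (hp : p ≠ ∞)
    {A : ι → Set X} (hA : ∀ k, MeasurableSet (A k)) (hdisj : Pairwise (AEDisjoint μ on A))
    (f : Lp E p μ) {g : ι → Lp E p μ} (hg : ∀ k, g k =ᵐ[μ] (A k).indicator f) :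
    ∑ k, ‖g k‖ ^ p.toReal ≤ ‖f‖ ^ p.toReal := by
  have key := sum_eLpNorm_indicator_rpow_le hp0 hp hA hdisj (f : X → E)
  have hgk : ∀ k, eLpNorm ((A k).indicator f) p μ = eLpNorm (g k) p μ := fun k =>
    (eLpNorm_congr_ae (hg k)).symm
  simp_rw [hgk] at key
  have hfin : ∀ h : Lp E p μ, eLpNorm h p μ ^ p.toReal ≠ ∞ := fun h =>
    ENNReal.rpow_ne_top_of_nonneg ENNReal.toReal_nonneg (eLpNorm_ne_top h)
  simp_rw [Lp.norm_def, ENNReal.toReal_rpow]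
  rw [← ENNReal.toReal_sum fun k _ => hfin (g k)]
  exact ENNReal.toReal_mono (hfin f) key

end Lp

end MeasureTheory

theorem sum_coisometries_holder_estimate_general
    (X : Type*) [MeasurableSpace X] (μ : Measure X)
    (p q : ℝ≥0∞) [Fact (1 ≤ p)] (hpq : 1 / p + 1 / q = 1)
    -- the indicator-multiplication projections on L_p(X)
    (P : Set X → (Lp ℂ p μ →L[ℂ] Lp ℂ p μ))
    (hP : ∀ (s : Set X) (f : Lp ℂ p μ), (P s f : X → ℂ) =ᵐ[μ] s.indicator f)
    (n : ℕ) (I Istar : Fin n → (Lp ℂ p μ →L[ℂ] Lp ℂ p μ))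
    (A : Fin n → Set X) (hA : ∀ k, MeasurableSet (A k))
    (hdisj : ∀ i j, i ≠ j → μ (A i ∩ A j) = 0)
    -- each `I_k` is a proper isometry with image `L_p(A_k)`
    (hIiso : ∀ k f, ‖I k f‖ = ‖f‖)
    (hIonto : ∀ k g, P (A k) g = g → ∃ f, I k f = g)
    -- `Istar k` is the coisometry `I_k⁻¹ P_{A_k}`
    (hIstar_inv : ∀ k f, Istar k (I k f) = f)
    (hIstar_proj : ∀ k f, Istar k (P (A k) f) = Istar k f)
    (a : Fin n → (Lp ℂ p μ →L[ℂ] Lp ℂ p μ)) :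
    (q = ∞ → ∀ C : ℝ, 0 ≤ C → (∀ k, ‖a k‖ ≤ C) →
      ‖∑ k, (a k).comp (Istar k)‖ ≤ C) ∧
    (q ≠ ∞ →
      ‖∑ k, (a k).comp (Istar k)‖ ≤ (∑ k, ‖a k‖ ^ q.toReal) ^ (1 / q.toReal)) := by
  have hconj : p.HolderConjugate q :=
    ENNReal.holderConjugate_iff.2 (by simpa only [one_div] using hpq)
  have hIstar : ∀ k g, ‖Istar k g‖ = ‖P (A k) g‖ := fun k =>
    norm_apply_eq_norm_of_isometry_leftInverse (hIiso k) (hIstar_inv k) (hIstar_proj k)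
      fun g => hIonto k _ (Lp.apply_apply_of_ae_eq_indicator (hP (A k)) g)
  have hT : ∀ f, ‖(∑ k, (a k).comp (Istar k)) f‖ ≤ ∑ k, ‖a k‖ * ‖P (A k) f‖ := fun f => by
    simpa only [hIstar] using ContinuousLinearMap.norm_sum_comp_apply_le _ a Istar f
  have hsum : p ≠ ∞ → ∀ f, ∑ k, ‖P (A k) f‖ ^ p.toReal ≤ ‖f‖ ^ p.toReal := fun hp f =>
    Lp.sum_norm_rpow_le_of_ae_eq_indicator hconj.ne_zero hp hA hdisj f fun k => hP (A k) f
  refine ⟨fun hq C hC ha => ?_, fun hq => ?_⟩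
  · obtain rfl : p = 1 := (ENNReal.HolderConjugate.eq_top_iff_eq_one q p).1 hq
    have hsum₁ := hsum ENNReal.one_ne_top
    simp only [ENNReal.toReal_one, Real.rpow_one] at hsum₁
    refine ContinuousLinearMap.opNorm_le_bound _ hC fun f => (hT f).trans ?_
    calc ∑ k, ‖a k‖ * ‖P (A k) f‖ ≤ ∑ k, C * ‖P (A k) f‖ := by gcongr with k; exact ha k
      _ ≤ C * ‖f‖ := by rw [← Finset.mul_sum]; gcongr; exact hsum₁ f
  · refine ContinuousLinearMap.opNorm_le_bound _ (by positivity) fun f => (hT f).trans ?_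
    by_cases hp : p = ∞
    · obtain rfl : q = 1 := (ENNReal.HolderConjugate.eq_top_iff_eq_one p q).1 hp
      simp only [ENNReal.toReal_one, Real.rpow_one, div_one, Finset.sum_mul]
      gcongr with k
      exact Lp.norm_le_of_ae_eq_indicator (hP _ f)
    · exact Real.sum_mul_le_of_sum_rpow_le _ (ENNReal.HolderConjugate.toReal_of_ne_top hp hq)
        (fun _ _ => norm_nonneg _) (fun _ _ => norm_nonneg _) (norm_nonneg f) (hsum hp f)

/-- For pairwise disjoint proper isometries `I_k` on `L_p(X)` with
coisometries `I_k^⋆ = I_k⁻¹ P_{A_k}`, one has `‖Σ a_k I_k^⋆‖ ≤ (Σ ‖a_k‖^q)^{1/q}` where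
`q` is conjugate to `p` (with the max convention for `q = ∞`). -/
theorem sum_coisometries_holder_estimate
    (X : Type*) [MeasurableSpace X] (μ : Measure X)
    (p q : ℝ≥0∞) [Fact (1 ≤ p)] (hpq : 1 / p + 1 / q = 1)
    -- the indicator-multiplication projections on L_p(X)
    (P : Set X → (Lp ℂ p μ →L[ℂ] Lp ℂ p μ))
    (hP : ∀ (s : Set X) (f : Lp ℂ p μ), (P s f : X → ℂ) =ᵐ[μ] s.indicator f)
    (n : ℕ) (I Istar : Fin n → (Lp ℂ p μ →L[ℂ] Lp ℂ p μ))
    (A : Fin n → Set X) (hA : ∀ k, MeasurableSet (A k))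
    (hdisj : ∀ i j, i ≠ j → μ (A i ∩ A j) = 0)
    -- each `I_k` is a proper isometry with image `L_p(A_k)`
    (hIiso : ∀ k f, ‖I k f‖ = ‖f‖)
    (hIrange : ∀ k f, P (A k) (I k f) = I k f)
    (hIonto : ∀ k g, P (A k) g = g → ∃ f, I k f = g)
    -- `Istar k` is the coisometry `I_k⁻¹ P_{A_k}`
    (hIstar_inv : ∀ k f, Istar k (I k f) = f)
    (hIstar_proj : ∀ k f, Istar k (P (A k) f) = Istar k f)
    (a : Fin n → (Lp ℂ p μ →L[ℂ] Lp ℂ p μ)) :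
    (q = ∞ → ∀ C : ℝ, 0 ≤ C → (∀ k, ‖a k‖ ≤ C) →
      ‖∑ k, (a k).comp (Istar k)‖ ≤ C) ∧
    (q ≠ ∞ →
      ‖∑ k, (a k).comp (Istar k)‖ ≤ (∑ k, ‖a k‖ ^ q.toReal) ^ (1 / q.toReal)) :=
  sum_coisometries_holder_estimate_general X μ p q hpq P hP n I Istar A hA hdisj hIiso hIonto
    hIstar_inv hIstar_proj a
end
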